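/- Let 𝓛 ⊂ ℝ^d be a thin admissible lattice with constants M̄, r, R. Then there exists C > 0 depending only on d, r, R, M̄ such that for all x₁, x₂ ∈ 𝓛 there exist m ∈ ℕ and points x¹ = x₁, x², …, x^m = x₂ in 𝓛 with (x^i, x^{i+1}) ∈ NN(𝓛) for all i = 1,…,m−1 and dist(x^i, [x₁,x₂]) ≤ C for all i, where [x₁,x₂] denotes the line segment joining x₁ and x₂. -/
import Mathlib


open scoped ENNReal Classical Pointwise

/-- Euclidean space `ℝ^n`. -/
abbrev Euc (n : ℕ) := EuclideanSpace ℝ (Fin n)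

/-- The projection `P_k : ℝ^d → ℝ^k` onto the first `k` coordinates. -/
noncomputable def projk (d k : ℕ) (h : k ≤ d) (x : Euc d) : Euc k :=
  (WithLp.equiv 2 (Fin k → ℝ)).symm (fun i => x (Fin.castLE h i))

/-- The copy of `ℝ^k` inside `ℝ^d`, as the set of vectors whose last `d-k` coordinates
vanish. -/
def flatSub (d k : ℕ) : Set (Euc d) := {x | ∀ i : Fin d, k ≤ (i : ℕ) → x i = 0}

/-- A thin admissible lattice in `ℝ^d` with constants `Mb, r, R`: a countable set within
distance `Mb` of `ℝ^k`, with minimal separation `r`, and within distance `R` of every point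
of `ℝ^k`. -/
structure ThinAdmissible (d k : ℕ) (Mb r R : ℝ) (L : Set (Euc d)) : Prop where
  countable : L.Countable
  thin : ∀ x ∈ L, Metric.infDist x (flatSub d k) ≤ Mb
  separation : ∀ x ∈ L, ∀ y ∈ L, x ≠ y → r ≤ dist x y
  covering : ∀ z ∈ flatSub d k, Metric.infDist z L ≤ R

/-- The truncated Voronoi cell `C(x)` of `x` in the lattice `L`: points of
`ℝ^k × [-2Mb,2Mb]^{d-k}` at least as close to `x` as to any other lattice point. -/
def vorCell (d k : ℕ) (Mb : ℝ) (L : Set (Euc d)) (x : Euc d) : Set (Euc d) :=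
  {w | (∀ i : Fin d, k ≤ (i : ℕ) → |w i| ≤ 2 * Mb) ∧ ∀ x' ∈ L, dist w x ≤ dist w x'}

/-- The set `NN(L)` of nearest-neighbour pairs: pairs of lattice points whose truncated
Voronoi cells share a face of Hausdorff dimension `d-1`. -/
def NNpairs (d k : ℕ) (Mb : ℝ) (L : Set (Euc d)) : Set (Euc d × Euc d) :=
  {p | p.1 ∈ L ∧ p.2 ∈ L ∧
    dimH (vorCell d k Mb L p.1 ∩ vorCell d k Mb L p.2) = (d : ℝ≥0∞) - 1}

open Metric Set Module MeasureTheory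


-- coordinate bound
lemma coord_abs_le_dist {d : ℕ} (x y : Euc d) (i : Fin d) : |x i - y i| ≤ dist x y := by
  rw [EuclideanSpace.dist_eq]
  have h1 : |x i - y i| = Real.sqrt (dist (x i) (y i) ^ 2) := by
    rw [Real.sqrt_sq_eq_abs, Real.dist_eq, abs_abs]
  rw [h1]
  apply Real.sqrt_le_sqrt
  exact Finset.single_le_sum (f := fun j => dist (x j) (y j) ^ 2)
    (fun j _ => sq_nonneg _) (Finset.mem_univ i)

-- le_infDist helper
lemma le_infDist' {α : Type*} [PseudoMetricSpace α] {s : Set α} (hs : s.Nonempty) {x : α} {b : ℝ}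
    (h : ∀ y ∈ s, b ≤ dist x y) : b ≤ Metric.infDist x s := by
  by_contra hlt
  push_neg at hlt
  obtain ⟨y, hy, hxy⟩ := (Metric.infDist_lt_iff hs).1 hlt
  exact absurd hxy (not_lt.2 (h y hy))

-- separated sets are closed
lemma isClosed_of_separated {α : Type*} [MetricSpace α] {L : Set α} {r : ℝ} (hr : 0 < r)
    (hsep : ∀ x ∈ L, ∀ y ∈ L, x ≠ y → r ≤ dist x y) : IsClosed L := by
  refine isClosed_of_closure_subset fun u hu => ?_
  rw [Metric.mem_closure_iff] at hu
  obtain ⟨p, hp, hup⟩ := hu (r/2) (by linarith)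
  rcases eq_or_ne u p with rfl | hne
  · exact hp
  · obtain ⟨q, hq, huq⟩ := hu (min (dist u p) (r/2)) (lt_min (dist_pos.2 hne) (by linarith))
    have hqp : q ≠ p := by
      intro h; subst h
      exact absurd (huq.trans_le (min_le_left _ _)) (lt_irrefl _)
    have := hsep p hp q hq (Ne.symm hqp)
    have : dist p q ≤ dist p u + dist u q := dist_triangle _ _ _
    have h2 : dist u q < r/2 := lt_of_lt_of_le huq (min_le_right _ _)
    have h3 : dist p u < r/2 := by rw [dist_comm]; exact hup
    linarith [hsep p hp q hq (Ne.symm hqp)]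



-- dimH of a submodule as a subset
lemma dimH_submodule_coe {d : ℕ} (D : Submodule ℝ (Euc d)) :
    dimH (D : Set (Euc d)) = (finrank ℝ D : ℝ≥0∞) := by
  have hiso : Isometry ((↑) : D → Euc d) := isometry_subtype_coe
  have h1 : ((↑) : D → Euc d) '' univ = (D : Set (Euc d)) := by
    ext u; simp [Set.mem_image]
  rw [← h1, hiso.dimH_image, Real.dimH_univ_eq_finrank]

lemma dimH_submodule_inter_ball {d : ℕ} (D : Submodule ℝ (Euc d)) {ρ : ℝ} (hρ : 0 < ρ) :
    dimH ((D : Set (Euc d)) ∩ Metric.ball 0 ρ) = (finrank ℝ D : ℝ≥0∞) := by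
  have hiso : Isometry ((↑) : D → Euc d) := isometry_subtype_coe
  have h1 : ((↑) : D → Euc d) '' (Metric.ball 0 ρ) = (D : Set (Euc d)) ∩ Metric.ball 0 ρ := by
    ext u
    constructor
    · rintro ⟨v, hv, rfl⟩
      refine ⟨v.2, ?_⟩
      rw [Metric.mem_ball] at hv ⊢
      rw [Subtype.dist_eq] at hv
      simpa using hv
    · rintro ⟨hu, hball⟩
      refine ⟨⟨u, hu⟩, ?_, rfl⟩
      rw [Metric.mem_ball, Subtype.dist_eq]
      simpa using hball
  rw [← h1, hiso.dimH_image, Real.dimH_of_mem_nhds (Metric.ball_mem_nhds _ hρ)]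

lemma isometry_const_add {E : Type*} [SeminormedAddCommGroup E] (w : E) :
    Isometry (fun v : E => w + v) :=
  Isometry.of_dist_eq fun a b => dist_add_left w a b

-- sandwich lemma for the dimension computation
lemma dimH_sandwich {d : ℕ} (hd : 1 ≤ d) (x y : Euc d) (hxy : x ≠ y) (w : Euc d)
    (hw : w ∈ AffineSubspace.perpBisector x y) {ρ : ℝ} (hρ : 0 < ρ) (s : Set (Euc d))
    (h1 : (AffineSubspace.perpBisector x y : Set (Euc d)) ∩ Metric.ball w ρ ⊆ s)
    (h2 : s ⊆ (AffineSubspace.perpBisector x y : Set (Euc d))) :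
    dimH s = (d : ℝ≥0∞) - 1 := by
  set H := AffineSubspace.perpBisector x y with hH
  set D := H.direction with hD
  have hfr : finrank ℝ D = d - 1 := by
    have hv : y -ᵥ x ≠ 0 := vsub_ne_zero.2 (Ne.symm hxy)
    have h3 : D = (ℝ ∙ (y -ᵥ x))ᗮ := AffineSubspace.direction_perpBisector x y
    have h4 : finrank ℝ (ℝ ∙ (y -ᵥ x)) = 1 := finrank_span_singleton hv
    have h5 := Submodule.finrank_add_finrank_orthogonal (K := ℝ ∙ (y -ᵥ x))
    rw [finrank_euclideanSpace_fin, h4] at h5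
    rw [h3]
    omega
  -- H ∩ ball = translate of D ∩ ball 0
  have hmem : ∀ u : Euc d, u ∈ H ↔ u - w ∈ D := by
    intro u
    rw [hD, ← AffineSubspace.vsub_right_mem_direction_iff_mem hw u, vsub_eq_sub]
  have hHball : (H : Set (Euc d)) ∩ Metric.ball w ρ
      = (fun v => w + v) '' ((D : Set (Euc d)) ∩ Metric.ball 0 ρ) := by
    ext u
    constructor
    · rintro ⟨hu, hball⟩
      refine ⟨u - w, ⟨(hmem u).1 hu, ?_⟩, by show w + (u - w) = u; rw [add_comm, sub_add_cancel]⟩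
      rw [Metric.mem_ball, dist_zero_right]
      rw [Metric.mem_ball, dist_eq_norm] at hball
      exact hball
    · rintro ⟨v, ⟨hv, hball⟩, rfl⟩
      constructor
      · show w + v ∈ (H : Set (Euc d))
        rw [AffineSubspace.mem_coe, hmem]
        simpa using hv
      · show dist (w + v) w < ρ
        rw [dist_eq_norm, add_sub_cancel_left]
        simpa using hball
  have hHset : (H : Set (Euc d)) = (fun v => w + v) '' (D : Set (Euc d)) := by
    ext u
    constructor
    · intro hu
      exact ⟨u - w, (hmem u).1 hu, by show w + (u - w) = u; rw [add_comm, sub_add_cancel]⟩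
    · rintro ⟨v, hv, rfl⟩
      show w + v ∈ (H : Set (Euc d))
      rw [AffineSubspace.mem_coe, hmem]
      simpa using hv
  have hlow : dimH ((H : Set (Euc d)) ∩ Metric.ball w ρ) = ((d - 1 : ℕ) : ℝ≥0∞) := by
    rw [hHball, (isometry_const_add w).dimH_image, dimH_submodule_inter_ball D hρ, hfr]
  have hup : dimH (H : Set (Euc d)) = ((d - 1 : ℕ) : ℝ≥0∞) := by
    rw [hHset, (isometry_const_add w).dimH_image, dimH_submodule_coe D, hfr]
  have hcast : ((d - 1 : ℕ) : ℝ≥0∞) = (d : ℝ≥0∞) - 1 := by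
    obtain ⟨n, rfl⟩ : ∃ n, d = n + 1 := ⟨d - 1, by omega⟩
    simp only [Nat.add_sub_cancel, Nat.cast_add, Nat.cast_one]
    rw [ENNReal.add_sub_cancel_right ENNReal.one_ne_top]
  rw [← hcast]
  refine le_antisymm ?_ ?_
  · exact le_trans (dimH_mono h2) (le_of_eq hup)
  · exact le_trans (le_of_eq hlow.symm) (dimH_mono h1)



-- perpBisector is a proper affine subspace
lemma perpBisector_ne_top {d : ℕ} {p q : Euc d} (hpq : p ≠ q) :
    AffineSubspace.perpBisector p q ≠ ⊤ := by
  intro h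
  have hp : p ∈ AffineSubspace.perpBisector p q := h ▸ AffineSubspace.mem_top ℝ _ p
  rw [AffineSubspace.mem_perpBisector_iff_dist_eq] at hp
  simp only [dist_self] at hp
  exact hpq (eq_of_dist_eq_zero hp.symm)

-- two perpBisectors from the same point are equal only for equal targets
lemma perpBisector_inj {d : ℕ} {p q s : Euc d} (hpq : p ≠ q) (hps : p ≠ s)
    (h : AffineSubspace.perpBisector p q = AffineSubspace.perpBisector p s) : q = s := by
  have hm : midpoint ℝ p q ∈ AffineSubspace.perpBisector p s :=
    h ▸ AffineSubspace.midpoint_mem_perpBisector p q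
  rw [AffineSubspace.mem_perpBisector_iff_dist_eq] at hm
  -- directions equal : spans equal
  have hdir := congrArg AffineSubspace.direction h
  rw [AffineSubspace.direction_perpBisector, AffineSubspace.direction_perpBisector] at hdir
  have hspan : (ℝ ∙ (q -ᵥ p)) = (ℝ ∙ (s -ᵥ p)) := by
    have := congrArg (fun K : Submodule ℝ (Euc d) => Kᗮ) hdir
    simpa [Submodule.orthogonal_orthogonal] using this
  have hmem : s -ᵥ p ∈ (ℝ ∙ (q -ᵥ p)) := by
    rw [hspan]; exact Submodule.mem_span_singleton_self _
  rw [Submodule.mem_span_singleton] at hmem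
  obtain ⟨c, hc⟩ := hmem
  simp only [vsub_eq_sub] at hc
  -- compute distances
  have hqp : q - p ≠ 0 := sub_ne_zero.2 (Ne.symm hpq)
  have hmid : midpoint ℝ p q = p + (1/2 : ℝ) • (q - p) := by
    have hinv : (⅟(2:ℝ)) = 1/2 := by norm_num
    rw [midpoint_eq_smul_add, hinv]
    module
  have hd1 : dist (midpoint ℝ p q) p = ‖(1/2 : ℝ)‖ * ‖q - p‖ := by
    rw [dist_eq_norm, hmid]
    rw [add_sub_cancel_left, norm_smul]
  have hd2 : dist (midpoint ℝ p q) s = ‖(1/2 : ℝ) - c‖ * ‖q - p‖ := by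
    rw [dist_eq_norm, hmid]
    have hs : s = p + c • (q - p) := by
      rw [hc]; abel
    rw [hs]
    have : p + (1/2 : ℝ) • (q - p) - (p + c • (q - p)) = ((1/2 : ℝ) - c) • (q - p) := by
      module
    rw [this, norm_smul]
  rw [hd1, hd2] at hm
  have hc' : ‖(1/2 : ℝ)‖ = ‖(1/2 : ℝ) - c‖ :=
    mul_right_cancel₀ (norm_ne_zero_iff.2 hqp) hm
  rw [Real.norm_eq_abs, Real.norm_eq_abs] at hc'
  have : c = 0 ∨ c = 1 := by
    rcases abs_cases ((1:ℝ)/2 - c) with ⟨h1, _⟩ | ⟨h1, _⟩ <;>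
      rcases abs_cases ((1:ℝ)/2) with ⟨h2, _⟩ | ⟨h2, _⟩ <;>
      [left; left; right; right] <;> nlinarith [hc'.symm]
  rcases this with rfl | rfl
  · exfalso
    apply hps
    have h0 : s - p = 0 := by rw [← hc, zero_smul]
    exact (sub_eq_zero.1 h0).symm
  · have h1 : s - p = q - p := by rw [← hc, one_smul]
    have := sub_left_injective (G := Euc d) h1
    exact this.symm



lemma finrank_direction_perpBisector {d : ℕ} {p q : Euc d} (hpq : p ≠ q) :
    finrank ℝ (AffineSubspace.perpBisector p q).direction = d - 1 := by
  have hv : q -ᵥ p ≠ 0 := vsub_ne_zero.2 (Ne.symm hpq)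
  rw [AffineSubspace.direction_perpBisector]
  have h4 : finrank ℝ (ℝ ∙ (q -ᵥ p)) = 1 := finrank_span_singleton hv
  have h5 := Submodule.finrank_add_finrank_orthogonal (K := ℝ ∙ (q -ᵥ p))
  rw [finrank_euclideanSpace_fin, h4] at h5
  omega

lemma W_ne_top {d : ℕ} (hd : 2 ≤ d) {p q s : Euc d} (hpq : p ≠ q) (hps : p ≠ s) (hqs : q ≠ s)
    {p₀ : Euc d} (h1 : p₀ ∈ AffineSubspace.perpBisector p q)
    (h2 : p₀ ∈ AffineSubspace.perpBisector p s) (v : Euc d) :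
    ((AffineSubspace.perpBisector p q).direction ⊓ (AffineSubspace.perpBisector p s).direction)
      ⊔ (ℝ ∙ v) ≠ ⊤ := by
  set D₁ := (AffineSubspace.perpBisector p q).direction with hD₁
  set D₂ := (AffineSubspace.perpBisector p s).direction with hD₂
  have hfr1 : finrank ℝ D₁ = d - 1 := finrank_direction_perpBisector hpq
  have hfr2 : finrank ℝ D₂ = d - 1 := finrank_direction_perpBisector hps
  have hne : D₁ ≠ D₂ := by
    intro h
    apply hqs
    exact perpBisector_inj hpq hps
      (AffineSubspace.ext_of_direction_eq h ⟨p₀, h1, h2⟩)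
  have hlt : D₁ ⊓ D₂ < D₁ := by
    rcases lt_or_eq_of_le (inf_le_left : D₁ ⊓ D₂ ≤ D₁) with h | h
    · exact h
    · exfalso
      apply hne
      have hle : D₁ ≤ D₂ := by
        rw [← h]; exact inf_le_right
      exact Submodule.eq_of_le_of_finrank_eq hle (by rw [hfr1, hfr2])
  have hinf : finrank ℝ (D₁ ⊓ D₂ : Submodule ℝ (Euc d)) ≤ d - 2 := by
    have := Submodule.finrank_lt_finrank_of_lt hlt
    omega
  have hspan : finrank ℝ (ℝ ∙ v) ≤ 1 := by
    rcases eq_or_ne v 0 with rfl | hv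
    · rw [Submodule.span_zero_singleton]
      simp
    · rw [finrank_span_singleton hv]
  intro htop
  have hsup : finrank ℝ ((D₁ ⊓ D₂) ⊔ (ℝ ∙ v) : Submodule ℝ (Euc d)) ≤ d - 1 := by
    have h := Submodule.finrank_sup_add_finrank_inf_eq (D₁ ⊓ D₂) (ℝ ∙ v)
    omega
  rw [htop] at hsup
  rw [finrank_top, finrank_euclideanSpace_fin] at hsup
  omega

lemma nn_pair_of_two_nearest {d k : ℕ} (hd : 1 ≤ d) {Mb : ℝ} (hMb : 0 < Mb) {L : Set (Euc d)}
    {x y : Euc d} (hx : x ∈ L) (hy : y ∈ L) (hxy : x ≠ y) (w : Euc d)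
    (hslab : ∀ i : Fin d, k ≤ (i : ℕ) → |w i| ≤ (3/2) * Mb)
    (hwx : dist w x = Metric.infDist w L) (hwy : dist w y = Metric.infDist w L)
    {δ : ℝ} (hδ : 0 < δ)
    (hgap : ∀ p ∈ L, dist w p ≠ Metric.infDist w L → Metric.infDist w L + δ ≤ dist w p)
    (honly : ∀ p ∈ L, dist w p = Metric.infDist w L → p = x ∨ p = y) :
    (x, y) ∈ NNpairs d k Mb L := by
  refine ⟨hx, hy, ?_⟩
  set ρ : ℝ := min (Mb/2) (δ/3) with hρdef
  have hρ : 0 < ρ := lt_min (by linarith) (by linarith)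
  have hρ1 : ρ ≤ Mb/2 := min_le_left _ _
  have hρ2 : ρ ≤ δ/3 := min_le_right _ _
  have hwmem : w ∈ AffineSubspace.perpBisector x y := by
    rw [AffineSubspace.mem_perpBisector_iff_dist_eq]
    rw [hwx, hwy]
  refine dimH_sandwich hd x y hxy w hwmem hρ _ ?_ ?_
  · -- lower inclusion
    rintro u ⟨huH, huball⟩
    rw [AffineSubspace.mem_coe, AffineSubspace.mem_perpBisector_iff_dist_eq] at huH
    rw [Metric.mem_ball] at huball
    have hslab' : ∀ i : Fin d, k ≤ (i : ℕ) → |u i| ≤ 2 * Mb := by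
      intro i hi
      have h1 : |u i| ≤ |u i - w i| + |w i| := by
        have := abs_add_le (u i - w i) (w i); simpa using this
      have h2 : |u i - w i| ≤ dist u w := coord_abs_le_dist u w i
      have := hslab i hi
      have : |u i| ≤ dist u w + (3/2) * Mb := by linarith
      linarith
    have hkey : ∀ p ∈ L, dist u x ≤ dist u p ∧ dist u y ≤ dist u p := by
      intro p hp
      by_cases hnear : dist w p = Metric.infDist w L
      · rcases honly p hp hnear with rfl | rfl
        · exact ⟨le_refl _, le_of_eq huH.symm⟩
        · exact ⟨le_of_eq huH, le_refl _⟩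
      · have hfar := hgap p hp hnear
        have hux : dist u x ≤ dist u w + dist w x := dist_triangle _ _ _
        have hup : dist w p ≤ dist w u + dist u p := dist_triangle _ _ _
        have huw : dist u w < ρ := huball
        have hwu : dist w u < ρ := by rw [dist_comm]; exact huball
        have h3 : dist u x ≤ Metric.infDist w L + ρ := by rw [hwx] at hux; linarith
        have h4 : Metric.infDist w L + δ - ρ ≤ dist u p := by linarith
        constructor
        · linarith
        · have huy2 : dist u y ≤ dist u w + dist w y := dist_triangle _ _ _
          rw [hwy] at huy2
          linarith
    exact ⟨⟨hslab', fun p hp => (hkey p hp).1⟩, ⟨hslab', fun p hp => (hkey p hp).2⟩⟩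
  · -- upper inclusion
    rintro u ⟨hux, huy⟩
    rw [AffineSubspace.mem_coe, AffineSubspace.mem_perpBisector_iff_dist_eq]
    exact le_antisymm (hux.2 y hy) (huy.2 x hx)

instance euc_addHaar (d : ℕ) : (volume : Measure (Euc d)).IsAddHaarMeasure := by constructor

lemma exists_in_ball_avoiding {d : ℕ} {ι : Type*} [Countable ι] (S : ι → Set (Euc d))
    (hS : ∀ i, volume (S i) = 0) (x : Euc d) {ε : ℝ} (hε : 0 < ε) :
    ∃ a ∈ Metric.ball x ε, ∀ i, a ∉ S i := by
  by_contra h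
  push_neg at h
  have hsub : Metric.ball x ε ⊆ ⋃ i, S i := by
    intro a ha
    obtain ⟨i, hi⟩ := h a ha
    exact Set.mem_iUnion.2 ⟨i, hi⟩
  have h1 : volume (Metric.ball x ε) ≤ volume (⋃ i, S i) := measure_mono hsub
  rw [measure_iUnion_null hS] at h1
  exact absurd h1 (by simpa using (measure_ball_pos volume x hε).ne')

lemma volume_translate_submodule {d : ℕ} (a : Euc d) (W : Submodule ℝ (Euc d)) (hW : W ≠ ⊤) :
    volume ((fun v => a + v) '' (W : Set (Euc d))) = 0 := by
  have himg : (fun v => a + v) '' (W : Set (Euc d)) = (fun u => -a + u) ⁻¹' (W : Set (Euc d)) := by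
    ext u
    constructor
    · rintro ⟨v, hv, rfl⟩
      simpa using hv
    · intro hu
      exact ⟨-a + u, hu, by show a + (-a + u) = u; rw [← add_assoc, add_neg_cancel, zero_add]⟩
  rw [himg, measure_preimage_add]
  exact Measure.addHaar_submodule volume W hW

lemma path_extend {d k : ℕ} {Mb C : ℝ} {L : Set (Euc d)} {x₁ x₂ y : Euc d}
    {m : ℕ} {f : Fin (m+1) → Euc d}
    (h0 : f 0 = x₁) (hmem : ∀ i, f i ∈ L)
    (hedge : ∀ i : Fin m, (f i.castSucc, f i.succ) ∈ NNpairs d k Mb L)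
    (hcorr : ∀ i, Metric.infDist (f i) (segment ℝ x₁ x₂) ≤ C)
    (hy : y ∈ L) (hyc : Metric.infDist y (segment ℝ x₁ x₂) ≤ C)
    (hNN : (f (Fin.last m), y) ∈ NNpairs d k Mb L) :
    ∃ g : Fin (m+2) → Euc d, g 0 = x₁ ∧ (∀ i, g i ∈ L) ∧
      (∀ i : Fin (m+1), (g i.castSucc, g i.succ) ∈ NNpairs d k Mb L) ∧
      (∀ i, Metric.infDist (g i) (segment ℝ x₁ x₂) ≤ C) ∧ g (Fin.last (m+1)) = y := by
  set g : Fin (m+2) → Euc d := Fin.snoc f y with hg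
  have hcast : ∀ j : Fin (m+1), g j.castSucc = f j := by
    intro j; rw [hg]; exact Fin.snoc_castSucc _ _ _
  have hlast : g (Fin.last (m+1)) = y := by
    rw [hg]; exact Fin.snoc_last _ _
  refine ⟨g, ?_, ?_, ?_, ?_, hlast⟩
  · rw [← Fin.castSucc_zero, hcast, h0]
  · intro i
    refine Fin.lastCases ?_ (fun j => ?_) i
    · rw [hlast]; exact hy
    · rw [hcast]; exact hmem j
  · intro i
    refine Fin.lastCases ?_ (fun j => ?_) i
    · have h2 : g ((Fin.last m).succ) = y := by rw [Fin.succ_last]; exact hlast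
      rw [hcast, h2]
      exact hNN
    · have h2 : g ((j.castSucc).succ) = f j.succ := by rw [Fin.succ_castSucc, hcast]
      rw [hcast, h2]
      exact hedge j
  · intro i
    refine Fin.lastCases ?_ (fun j => ?_) i
    · rw [hlast]; exact hyc
    · rw [hcast]; exact hcorr j

set_option maxHeartbeats 2000000 in
/-- **Existence of nearest-neighbour paths close to segments** in thin admissible
lattices: there is `C > 0`, depending only on `d, k` and the constants `Mb, r, R`, such
that any two lattice points `x₁, x₂` can be joined by a path of nearest neighbours in the
lattice staying within distance `C` of the segment `[x₁,x₂]`. -/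
theorem nn_path_near_segment
    (d k : ℕ) (hk : 2 ≤ k) (hkd : k < d)
    (Mb r R : ℝ) (hMb : 0 < Mb) (hr : 0 < r) (hR : 0 < R) :
    ∃ C : ℝ, 0 < C ∧
      ∀ L : Set (Euc d), ThinAdmissible d k Mb r R L →
        ∀ x₁ ∈ L, ∀ x₂ ∈ L,
          ∃ m : ℕ, ∃ f : Fin (m + 1) → Euc d,
            f 0 = x₁ ∧ f (Fin.last m) = x₂ ∧ (∀ i, f i ∈ L) ∧
            (∀ i : Fin m, (f i.castSucc, f i.succ) ∈ NNpairs d k Mb L) ∧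
            ∀ i, Metric.infDist (f i) (segment ℝ x₁ x₂) ≤ C := by
  have hd2 : 2 ≤ d := le_trans hk (le_of_lt hkd)
  have hd1 : 1 ≤ d := le_trans (by norm_num) hd2
  have hd0 : 0 < d := by omega
  refine ⟨Mb + R + r, by linarith, ?_⟩
  intro L hTA x₁ hx₁ x₂ hx₂
  set C : ℝ := Mb + R + r with hC
  have hLne : L.Nonempty := ⟨x₁, hx₁⟩
  have hLclosed : IsClosed L := isClosed_of_separated hr hTA.separation
  haveI hLcnt : Countable ↥L := hTA.countable.to_subtype
  -- flat facts
  have hflat_ne : (flatSub d k).Nonempty := ⟨0, fun i _ => rfl⟩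
  have hflat_closed : IsClosed (flatSub d k) := by
    have : flatSub d k = ⋂ (i : Fin d), ⋂ (_ : k ≤ (i : ℕ)), {x : Euc d | x i = 0} := by
      ext x; simp [flatSub, Set.mem_iInter]
    rw [this]
    refine isClosed_iInter fun i => isClosed_iInter fun _ => ?_
    have hcont : Continuous (fun x : Euc d => x i) :=
      (EuclideanSpace.proj (𝕜 := ℝ) i).continuous
    exact isClosed_eq hcont continuous_const
  have hcoordflat : ∀ (x : Euc d) (i : Fin d), k ≤ (i : ℕ) →
      |x i| ≤ Metric.infDist x (flatSub d k) := by
    intro x i hi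
    refine le_infDist' hflat_ne fun z hz => ?_
    have h1 : |x i - z i| ≤ dist x z := coord_abs_le_dist x z i
    rw [hz i hi, sub_zero] at h1
    exact h1
  -- a far-away point of L always exists
  have hfar : ∀ (w : Euc d) (c : ℝ), ∃ p ∈ L, c < dist w p := by
    intro w c
    set s : ℝ := |c| + ‖w‖ + R + 2 with hs
    set z : Euc d := s • (EuclideanSpace.single (⟨0, hd0⟩ : Fin d) (1:ℝ)) with hz
    have hzflat : z ∈ flatSub d k := by
      intro i hi
      have hine : i ≠ (⟨0, hd0⟩ : Fin d) := by
        intro h; rw [h] at hi; simp at hi; omega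
      rw [hz]
      simp [EuclideanSpace.single_apply, hine]
    have hzL : Metric.infDist z L ≤ R := hTA.covering z hzflat
    obtain ⟨p, hp, hpz⟩ : ∃ p ∈ L, dist z p < R + 1 :=
      (Metric.infDist_lt_iff hLne).1 (by linarith)
    have hznorm : ‖z‖ = s := by
      rw [hz, norm_smul, EuclideanSpace.norm_single]
      have : (0:ℝ) ≤ s := by positivity
      simp [abs_of_nonneg this]
    have h1 : ‖z‖ - ‖w‖ ≤ dist w z := by
      rw [dist_eq_norm]
      have := norm_sub_norm_le (w - z) (-z)
      have h2 : ‖w - z‖ ≥ ‖z‖ - ‖w‖ := by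
        have := norm_sub_norm_le z w
        rw [← norm_sub_rev w z] at this
        linarith [norm_sub_norm_le z w, norm_sub_rev z w]
      linarith
    have h3 : dist w z ≤ dist w p + dist p z := dist_triangle _ _ _
    have h4 : dist p z < R + 1 := by rw [dist_comm]; exact hpz
    refine ⟨p, hp, ?_⟩
    have h5 : |c| + 1 ≤ dist w p := by
      rw [hznorm] at h1
      have hwn : (0:ℝ) ≤ ‖w‖ := norm_nonneg _
      linarith
    have := abs_nonneg c
    linarith [le_abs_self c]
  -- gap around the nearest-point distance
  have hgap0 : ∀ w : Euc d, ∃ δ > 0, ∀ p ∈ L,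
      dist w p ≠ Metric.infDist w L → Metric.infDist w L + δ ≤ dist w p := by
    intro w
    set m := Metric.infDist w L with hm
    obtain ⟨p₁, hp₁, hp₁d⟩ := hfar w m
    set L' : Set (Euc d) := {p | p ∈ L ∧ dist w p ≠ m} with hL'
    have hL'sub : L' ⊆ L := fun p hp => hp.1
    have hL'ne : L'.Nonempty := ⟨p₁, hp₁, ne_of_gt hp₁d⟩
    have hL'closed : IsClosed L' :=
      isClosed_of_separated hr fun x hx y hy hxy =>
        hTA.separation x (hL'sub hx) y (hL'sub hy) hxy
    obtain ⟨q, hq, hqd⟩ := hL'closed.exists_infDist_eq_dist hL'ne w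
    have hq1 : m ≤ dist w q := Metric.infDist_le_dist_of_mem (hL'sub hq)
    have hq2 : m < dist w q := lt_of_le_of_ne hq1 (Ne.symm hq.2)
    refine ⟨dist w q - m, by linarith, ?_⟩
    intro p hp hpne
    have : Metric.infDist w L' ≤ dist w p := Metric.infDist_le_dist_of_mem ⟨hp, hpne⟩
    rw [← hqd]
    linarith [hqd ▸ this]
  choose δw hδpos hδgap using hgap0
  -- epsilon
  set ε : ℝ := min r Mb / 4 with hε
  have hεpos : 0 < ε := by
    have : 0 < min r Mb := lt_min hr hMb
    positivity
  have hεr : ε ≤ r / 4 := by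
    have : min r Mb ≤ r := min_le_left _ _
    rw [hε]; linarith
  have hεM : ε ≤ Mb / 4 := by
    have : min r Mb ≤ Mb := min_le_right _ _
    rw [hε]; linarith
  -- choose a generic a
  have hSa : ∀ T : ↥L × ↥L × ↥L, volume (if (T.1 : Euc d) ≠ (T.2.1 : Euc d) then
      (AffineSubspace.perpBisector (T.1 : Euc d) (T.2.1 : Euc d) : Set (Euc d)) else ∅) = 0 := by
    intro T
    split_ifs with h
    · exact Measure.addHaar_affineSubspace volume _ (perpBisector_ne_top h)
    · simp
  obtain ⟨a, ha_ball, ha_avoid⟩ := exists_in_ball_avoiding _ hSa x₁ hεpos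
  -- choose a generic b
  set Sb : ↥L × ↥L × ↥L → Set (Euc d) := fun T =>
    if h : (T.1 : Euc d) ≠ (T.2.1 : Euc d) ∧ (T.1 : Euc d) ≠ (T.2.2 : Euc d) ∧
        (T.2.1 : Euc d) ≠ (T.2.2 : Euc d) ∧
        ∃ p₀ : Euc d, p₀ ∈ AffineSubspace.perpBisector (T.1 : Euc d) (T.2.1 : Euc d) ∧
          p₀ ∈ AffineSubspace.perpBisector (T.1 : Euc d) (T.2.2 : Euc d) then
      (fun v => a + v) ''
        ((((AffineSubspace.perpBisector (T.1 : Euc d) (T.2.1 : Euc d)).direction ⊓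
           (AffineSubspace.perpBisector (T.1 : Euc d) (T.2.2 : Euc d)).direction)
          ⊔ (ℝ ∙ (h.2.2.2.choose - a)) : Submodule ℝ (Euc d)) : Set (Euc d))
    else ∅ with hSbdef
  have hSb : ∀ T, volume (Sb T) = 0 := by
    intro T
    rw [hSbdef]
    beta_reduce
    split_ifs with h
    · exact volume_translate_submodule a _
        (W_ne_top hd2 h.1 h.2.1 h.2.2.1 h.2.2.2.choose_spec.1 h.2.2.2.choose_spec.2 _)
    · simp
  obtain ⟨b, hb_ball, hb_avoid⟩ := exists_in_ball_avoiding Sb hSb x₂ hεpos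
  -- the segment parametrization
  set γ : ℝ → Euc d := fun t => a + t • (b - a) with hγ
  have hγ0 : γ 0 = a := by rw [hγ]; simp
  have hγ1 : γ 1 = b := by rw [hγ]; simp
  have hγcomb : ∀ t : ℝ, γ t = (1 - t) • a + t • b := by
    intro t; rw [hγ]; simp only; module
  have hγdist : ∀ t t' : ℝ, dist (γ t) (γ t') = |t - t'| * ‖b - a‖ := by
    intro t t'
    rw [dist_eq_norm]
    have h1 : γ t - γ t' = (t - t') • (b - a) := by rw [hγ]; simp only; module
    rw [h1, norm_smul, Real.norm_eq_abs]
  have hax : dist a x₁ ≤ ε := le_of_lt (Metric.mem_ball.1 ha_ball)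
  have hbx : dist b x₂ ≤ ε := le_of_lt (Metric.mem_ball.1 hb_ball)
  -- the corresponding point on the segment
  have hseg : ∀ t ∈ Set.Icc (0:ℝ) 1, ((1 - t) • x₁ + t • x₂ ∈ segment ℝ x₁ x₂) ∧
      dist (γ t) ((1 - t) • x₁ + t • x₂) ≤ ε := by
    rintro t ⟨ht0, ht1⟩
    constructor
    · exact ⟨1 - t, t, by linarith, ht0, by ring, rfl⟩
    · rw [hγcomb t, dist_eq_norm]
      have h1 : (1 - t) • a + t • b - ((1 - t) • x₁ + t • x₂)
          = (1 - t) • (a - x₁) + t • (b - x₂) := by module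
      rw [h1]
      have h2 := norm_add_le ((1 - t) • (a - x₁)) (t • (b - x₂))
      rw [norm_smul, norm_smul, Real.norm_eq_abs, Real.norm_eq_abs,
        abs_of_nonneg (by linarith : (0:ℝ) ≤ 1 - t), abs_of_nonneg ht0] at h2
      have h3 : ‖a - x₁‖ ≤ ε := by rw [← dist_eq_norm]; exact hax
      have h4 : ‖b - x₂‖ ≤ ε := by rw [← dist_eq_norm]; exact hbx
      have h5 : (1 - t) * ‖a - x₁‖ + t * ‖b - x₂‖ ≤ (1 - t) * ε + t * ε := by
        apply add_le_add
        · exact mul_le_mul_of_nonneg_left h3 (by linarith)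
        · exact mul_le_mul_of_nonneg_left h4 ht0
      calc ‖(1 - t) • (a - x₁) + t • (b - x₂)‖ ≤ (1 - t) * ‖a - x₁‖ + t * ‖b - x₂‖ := h2
        _ ≤ (1 - t) * ε + t * ε := h5
        _ = ε := by ring
  -- slab coordinates along γ
  have hcoordγ : ∀ t ∈ Set.Icc (0:ℝ) 1, ∀ i : Fin d, k ≤ (i : ℕ) → |γ t i| ≤ (3/2) * Mb := by
    rintro t ⟨ht0, ht1⟩ i hi
    have hxa : |a i| ≤ Mb + ε := by
      have h1 : |x₁ i| ≤ Mb := le_trans (hcoordflat x₁ i hi) (hTA.thin x₁ hx₁)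
      have h2 : |a i - x₁ i| ≤ dist a x₁ := coord_abs_le_dist a x₁ i
      have h3 : |a i| ≤ |a i - x₁ i| + |x₁ i| := by
        have := abs_add_le (a i - x₁ i) (x₁ i); simpa using this
      linarith
    have hxb : |b i| ≤ Mb + ε := by
      have h1 : |x₂ i| ≤ Mb := le_trans (hcoordflat x₂ i hi) (hTA.thin x₂ hx₂)
      have h2 : |b i - x₂ i| ≤ dist b x₂ := coord_abs_le_dist b x₂ i
      have h3 : |b i| ≤ |b i - x₂ i| + |x₂ i| := by
        have := abs_add_le (b i - x₂ i) (x₂ i); simpa using this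
      linarith
    have hco : γ t i = (1 - t) * a i + t * b i := by
      rw [hγcomb t]
      simp [PiLp.add_apply, PiLp.smul_apply, smul_eq_mul]
    rw [hco]
    have h6 : |(1 - t) * a i + t * b i| ≤ (1 - t) * |a i| + t * |b i| := by
      calc |(1 - t) * a i + t * b i| ≤ |(1 - t) * a i| + |t * b i| := abs_add_le _ _
        _ = (1 - t) * |a i| + t * |b i| := by
            rw [abs_mul, abs_mul, abs_of_nonneg (by linarith : (0:ℝ) ≤ 1 - t),
              abs_of_nonneg ht0]
    have h7 : (1 - t) * |a i| + t * |b i| ≤ Mb + ε := by nlinarith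
    have h8 : Mb + ε ≤ (3/2) * Mb := by linarith [hεM]
    linarith
  -- γ stays close to the flat
  have hγflat : ∀ t ∈ Set.Icc (0:ℝ) 1, ∃ z ∈ flatSub d k, dist (γ t) z ≤ Mb + ε := by
    rintro t ⟨ht0, ht1⟩
    obtain ⟨pa, hpa, hpad⟩ := hflat_closed.exists_infDist_eq_dist hflat_ne a
    obtain ⟨pb, hpb, hpbd⟩ := hflat_closed.exists_infDist_eq_dist hflat_ne b
    refine ⟨(1 - t) • pa + t • pb, ?_, ?_⟩
    · intro i hi
      have h1 : pa i = 0 := hpa i hi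
      have h2 : pb i = 0 := hpb i hi
      simp [PiLp.add_apply, PiLp.smul_apply, smul_eq_mul, h1, h2]
    · rw [hγcomb t, dist_eq_norm]
      have h1 : (1 - t) • a + t • b - ((1 - t) • pa + t • pb)
          = (1 - t) • (a - pa) + t • (b - pb) := by module
      rw [h1]
      have ha' : ‖a - pa‖ ≤ Mb + ε := by
        rw [← dist_eq_norm, ← hpad]
        calc Metric.infDist a (flatSub d k)
            ≤ Metric.infDist x₁ (flatSub d k) + dist a x₁ := Metric.infDist_le_infDist_add_dist
          _ ≤ Mb + ε := add_le_add (hTA.thin x₁ hx₁) hax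
      have hb' : ‖b - pb‖ ≤ Mb + ε := by
        rw [← dist_eq_norm, ← hpbd]
        calc Metric.infDist b (flatSub d k)
            ≤ Metric.infDist x₂ (flatSub d k) + dist b x₂ := Metric.infDist_le_infDist_add_dist
          _ ≤ Mb + ε := add_le_add (hTA.thin x₂ hx₂) hbx
      have h2 := norm_add_le ((1 - t) • (a - pa)) (t • (b - pb))
      rw [norm_smul, norm_smul, Real.norm_eq_abs, Real.norm_eq_abs,
        abs_of_nonneg (by linarith : (0:ℝ) ≤ 1 - t), abs_of_nonneg ht0] at h2
      nlinarith [norm_nonneg (a - pa), norm_nonneg (b - pb)]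
  -- nearest points to γ t satisfy the corridor estimate
  have hNcorr : ∀ t ∈ Set.Icc (0:ℝ) 1, ∀ p ∈ L,
      dist (γ t) p = Metric.infDist (γ t) L → Metric.infDist p (segment ℝ x₁ x₂) ≤ C := by
    intro t ht p hp hpd
    obtain ⟨z, hz, hzd⟩ := hγflat t ht
    have h1 : Metric.infDist (γ t) L ≤ Metric.infDist z L + dist (γ t) z :=
      Metric.infDist_le_infDist_add_dist
    have h2 : Metric.infDist z L ≤ R := hTA.covering z hz
    obtain ⟨hmem, hsegd⟩ := hseg t ht
    have h3 : Metric.infDist p (segment ℝ x₁ x₂) ≤ dist p ((1 - t) • x₁ + t • x₂) :=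
      Metric.infDist_le_dist_of_mem hmem
    have h4 : dist p ((1 - t) • x₁ + t • x₂) ≤ dist p (γ t) + dist (γ t) ((1 - t) • x₁ + t • x₂) :=
      dist_triangle _ _ _
    have h5 : dist p (γ t) = dist (γ t) p := dist_comm _ _
    have h6 : 2 * ε ≤ r := by
      have : ε ≤ r / 4 := hεr
      linarith
    rw [hC]
    linarith
  -- no three distinct nearest points
  have hN2 : ∀ t ∈ Set.Icc (0:ℝ) 1, ∀ x y z : Euc d, x ∈ L → y ∈ L → z ∈ L →
      dist (γ t) x = Metric.infDist (γ t) L → dist (γ t) y = Metric.infDist (γ t) L →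
      dist (γ t) z = Metric.infDist (γ t) L → x ≠ y → x ≠ z → y ≠ z → False := by
    intro t ht x y z hx hy hz hnx hny hnz hxy hxz hyz
    have hmem1 : γ t ∈ AffineSubspace.perpBisector x y := by
      rw [AffineSubspace.mem_perpBisector_iff_dist_eq, hnx, hny]
    have hmem2 : γ t ∈ AffineSubspace.perpBisector x z := by
      rw [AffineSubspace.mem_perpBisector_iff_dist_eq, hnx, hnz]
    set T : ↥L × ↥L × ↥L := (⟨x, hx⟩, ⟨y, hy⟩, ⟨z, hz⟩) with hT
    rcases eq_or_ne t 0 with rfl | ht0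
    · -- a itself would be on a bisector
      apply ha_avoid T
      rw [if_pos]
      · rw [← hγ0]
        exact hmem1
      · exact hxy
    · -- b would be in the excluded affine set
      apply hb_avoid T
      rw [hSbdef]
      simp only
      have hcond : (x ≠ y ∧ x ≠ z ∧ y ≠ z ∧
          ∃ p₀ : Euc d, p₀ ∈ AffineSubspace.perpBisector x y ∧
            p₀ ∈ AffineSubspace.perpBisector x z) :=
        ⟨hxy, hxz, hyz, ⟨γ t, hmem1, hmem2⟩⟩
      rw [dif_pos hcond]
      set p₀ := hcond.2.2.2.choose with hp₀def
      obtain ⟨hp₀1, hp₀2⟩ := hcond.2.2.2.choose_spec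
      refine ⟨b - a, ?_, by show a + (b - a) = b; rw [add_comm, sub_add_cancel]⟩
      have hba : b - a = t⁻¹ • (γ t - a) := by
        rw [hγ]
        simp only
        rw [add_sub_cancel_left, smul_smul, inv_mul_cancel₀ ht0, one_smul]
      have hsplit : γ t - a = (γ t - p₀) + (p₀ - a) := by abel
      have hm1 : γ t - p₀ ∈ (AffineSubspace.perpBisector x y).direction := by
        have := AffineSubspace.vsub_mem_direction hmem1 hp₀1
        simpa [vsub_eq_sub] using this
      have hm2 : γ t - p₀ ∈ (AffineSubspace.perpBisector x z).direction := by
        have := AffineSubspace.vsub_mem_direction hmem2 hp₀2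
        simpa [vsub_eq_sub] using this
      have hmW : γ t - a ∈ ((AffineSubspace.perpBisector x y).direction ⊓
          (AffineSubspace.perpBisector x z).direction) ⊔ (ℝ ∙ (p₀ - a)) := by
        rw [hsplit]
        exact Submodule.add_mem _ (Submodule.mem_sup_left ⟨hm1, hm2⟩)
          (Submodule.mem_sup_right (Submodule.mem_span_singleton_self _))
      rw [hba]
      exact Submodule.smul_mem _ _ hmW
  -- semicontinuity of nearest points
  have hNsub : ∀ t : ℝ, ∃ δ' > 0, ∀ t' : ℝ, |t' - t| < δ' → ∀ p ∈ L,
      dist (γ t') p = Metric.infDist (γ t') L → dist (γ t) p = Metric.infDist (γ t) L := by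
    intro t
    set δ := δw (γ t) with hδdef
    have hδp : 0 < δ := hδpos (γ t)
    refine ⟨δ / (3 * (‖b - a‖ + 1)), by positivity, ?_⟩
    intro t' ht' p hp hpd
    have hnb : (0:ℝ) ≤ ‖b - a‖ := norm_nonneg _
    have hdist : dist (γ t') (γ t) < δ / 3 := by
      rw [hγdist]
      calc |t' - t| * ‖b - a‖ ≤ |t' - t| * (‖b - a‖ + 1) := by
            apply mul_le_mul_of_nonneg_left (by linarith) (abs_nonneg _)
        _ < (δ / (3 * (‖b - a‖ + 1))) * (‖b - a‖ + 1) := by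
            apply mul_lt_mul_of_pos_right ht' (by linarith)
        _ = δ / 3 := by field_simp
    by_contra hne
    have hfar' := hδgap (γ t) p hp hne
    obtain ⟨x₀, hx₀L, hx₀⟩ := hLclosed.exists_infDist_eq_dist hLne (γ t)
    have h1 : Metric.infDist (γ t') L ≤ dist (γ t') x₀ := Metric.infDist_le_dist_of_mem hx₀L
    have h2 : dist (γ t') x₀ ≤ dist (γ t') (γ t) + dist (γ t) x₀ := dist_triangle _ _ _
    have h3 : dist (γ t) p ≤ dist (γ t) (γ t') + dist (γ t') p := dist_triangle _ _ _
    have h4 : dist (γ t) (γ t') = dist (γ t') (γ t) := dist_comm _ _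
    rw [hpd] at h3
    rw [← hx₀] at h2
    linarith
  -- uniqueness of nearest point at the endpoints
  have huniq : ∀ (x₀ : Euc d), x₀ ∈ L → ∀ (c : Euc d), dist c x₀ ≤ ε →
      (Metric.infDist c L = dist c x₀ ∧ ∀ p ∈ L, dist c p = Metric.infDist c L → p = x₀) := by
    intro x₀ hx₀ c hc
    have h2ε : 2 * ε ≤ r := by linarith [hεr]
    have hinf : Metric.infDist c L = dist c x₀ := by
      refine le_antisymm (Metric.infDist_le_dist_of_mem hx₀) ?_
      refine le_infDist' hLne fun p hp => ?_
      rcases eq_or_ne p x₀ with rfl | hne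
      · exact le_refl _
      · have hsep := hTA.separation x₀ hx₀ p hp (Ne.symm hne)
        have htri : dist x₀ p ≤ dist x₀ c + dist c p := dist_triangle _ _ _
        have h5 : dist x₀ c = dist c x₀ := dist_comm _ _
        linarith
    refine ⟨hinf, fun p hp hpd => ?_⟩
    by_contra hne
    have hsep := hTA.separation x₀ hx₀ p hp (fun h => hne h.symm)
    have h1 : dist c p = dist c x₀ := by rw [hpd, hinf]
    have htri : dist x₀ p ≤ dist x₀ c + dist c p := dist_triangle _ _ _
    have h5 : dist x₀ c = dist c x₀ := dist_comm _ _
    linarith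
  -- the reachability predicate
  set P : ℝ → Prop := fun t => ∃ (m : ℕ) (f : Fin (m+1) → Euc d),
    f 0 = x₁ ∧ (∀ i, f i ∈ L) ∧
    (∀ i : Fin m, (f i.castSucc, f i.succ) ∈ NNpairs d k Mb L) ∧
    (∀ i, Metric.infDist (f i) (segment ℝ x₁ x₂) ≤ C) ∧
    (f (Fin.last m) ∈ L ∧ dist (γ t) (f (Fin.last m)) = Metric.infDist (γ t) L) with hP
  -- P 0 holds
  have hP0 : P 0 := by
    refine ⟨0, fun _ => x₁, rfl, fun _ => hx₁, fun i => i.elim0, ?_, hx₁, ?_⟩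
    · intro i
      have : Metric.infDist x₁ (segment ℝ x₁ x₂) = 0 :=
        Metric.infDist_zero_of_mem (left_mem_segment ℝ x₁ x₂)
      rw [this, hC]; linarith
    · rw [hγ0]
      have := (huniq x₁ hx₁ a hax).1
      rw [this]
  -- key local stability of P
  have hkey : ∀ t ∈ Set.Icc (0:ℝ) 1, ∃ δ' > 0, ∀ t' ∈ Set.Icc (0:ℝ) 1,
      |t' - t| < δ' → (P t ↔ P t') := by
    intro t ht
    obtain ⟨δ', hδ'pos, hδ'⟩ := hNsub t
    refine ⟨δ', hδ'pos, ?_⟩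
    intro t' ht' hlt
    constructor
    · -- extend forward
      rintro ⟨m, f, hf0, hfmem, hfedge, hfcorr, hflast, hfnear⟩
      obtain ⟨p, hpL, hpd⟩ := hLclosed.exists_infDist_eq_dist hLne (γ t')
      have hpd' : dist (γ t') p = Metric.infDist (γ t') L := hpd.symm
      rcases eq_or_ne p (f (Fin.last m)) with rfl | hne
      · exact ⟨m, f, hf0, hfmem, hfedge, hfcorr, hflast, hpd'⟩
      · -- p and f(last) are both nearest at time t; they are two distinct nearest points
        have hpneart : dist (γ t) p = Metric.infDist (γ t) L := hδ' t' hlt p hpL hpd'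
        have honly : ∀ q ∈ L, dist (γ t) q = Metric.infDist (γ t) L →
            q = f (Fin.last m) ∨ q = p := by
          intro q hq hqd
          by_contra hcon
          push_neg at hcon
          exact hN2 t ht q (f (Fin.last m)) p hq hflast hpL hqd hfnear hpneart
            hcon.1 hcon.2 (fun h => hne h.symm) |>.elim
        have hNN : (f (Fin.last m), p) ∈ NNpairs d k Mb L :=
          nn_pair_of_two_nearest hd1 hMb hflast hpL (Ne.symm hne) (γ t)
            (hcoordγ t ht) hfnear hpneart (hδpos (γ t))
            (fun q hq hqne => hδgap (γ t) q hq hqne) honly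
        have hpc : Metric.infDist p (segment ℝ x₁ x₂) ≤ C := hNcorr t ht p hpL hpneart
        obtain ⟨g, hg0, hgmem, hgedge, hgcorr, hglast⟩ :=
          path_extend hf0 hfmem hfedge hfcorr hpL hpc hNN
        refine ⟨m + 1, g, hg0, hgmem, hgedge, hgcorr, ?_, ?_⟩
        · rw [hglast]; exact hpL
        · rw [hglast]; exact hpd'
    · -- restrict backward
      rintro ⟨m, f, hf0, hfmem, hfedge, hfcorr, hflast, hfnear⟩
      have : dist (γ t) (f (Fin.last m)) = Metric.infDist (γ t) L :=
        hδ' t' hlt (f (Fin.last m)) hflast hfnear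
      exact ⟨m, f, hf0, hfmem, hfedge, hfcorr, hflast, this⟩
  -- clopen argument on [0,1]
  haveI : PreconnectedSpace (Set.Icc (0:ℝ) 1) := Subtype.preconnectedSpace isPreconnected_Icc
  set T : Set (Set.Icc (0:ℝ) 1) := {t | P ↑t} with hTdef
  have hTopen : IsOpen T := by
    rw [Metric.isOpen_iff]
    intro t htT
    obtain ⟨δ', hδ'pos, hiff⟩ := hkey ↑t t.2
    refine ⟨δ', hδ'pos, fun t' ht' => ?_⟩
    rw [Metric.mem_ball, Subtype.dist_eq, Real.dist_eq] at ht'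
    exact (hiff ↑t' t'.2 ht').1 htT
  have hTclosed : IsClosed T := by
    rw [← isOpen_compl_iff, Metric.isOpen_iff]
    intro t htT
    obtain ⟨δ', hδ'pos, hiff⟩ := hkey ↑t t.2
    refine ⟨δ', hδ'pos, fun t' ht' ht'T => ?_⟩
    rw [Metric.mem_ball, Subtype.dist_eq, Real.dist_eq] at ht'
    exact htT ((hiff ↑t' t'.2 ht').2 ht'T)
  have h0mem : (⟨0, Set.mem_Icc.mpr ⟨le_refl 0, by norm_num⟩⟩ : Set.Icc (0:ℝ) 1) ∈ T := hP0
  have hTuniv : T = Set.univ := IsClopen.eq_univ ⟨hTclosed, hTopen⟩ ⟨_, h0mem⟩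
  have hP1 : P 1 := by
    have h1mem : (⟨1, Set.mem_Icc.mpr ⟨by norm_num, le_refl 1⟩⟩ : Set.Icc (0:ℝ) 1) ∈ T := by
      rw [hTuniv]; exact Set.mem_univ _
    exact h1mem
  obtain ⟨m, f, hf0, hfmem, hfedge, hfcorr, hflastL, hfnear⟩ := hP1
  have hflast : f (Fin.last m) = x₂ := by
    apply (huniq x₂ hx₂ b hbx).2
    · exact hflastL
    · rw [← hγ1]
      exact hfnear
  exact ⟨m, f, hf0, hflast, hfmem, hfedge, hfcorr⟩
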